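/- Let (X,d) be a compact metric space and let α be a fully supported Borel probability measure on X. Then for every pair x, x' ∈ X, d_α^{(ε)}(x,x') → d(x,x') as ε → 0. -/

import Mathlib

open MeasureTheory Metric Set Filter

/-- The ℓ¹-Wasserstein distance: infimum over couplings of the expected distance. -/
noncomputable def wassersteinDist {X : Type*} [MeasurableSpace X] [PseudoMetricSpace X]
    (α β : Measure X) : ℝ :=
  sInf ((fun μ : Measure (X × X) => ∫ p, dist p.1 p.2 ∂μ) ''
    {μ : Measure (X × X) | μ.map Prod.fst = α ∧ μ.map Prod.snd = β})

/-- The (one-sided) Prokhorov distance between Borel probability measures. -/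
noncomputable def prokhorovDist {X : Type*} [MeasurableSpace X] [PseudoMetricSpace X]
    (α β : Measure X) : ℝ :=
  sInf {δ : ℝ | 0 < δ ∧ ∀ A : Set X, α A ≤ β (thickening δ A) + ENNReal.ofReal δ}

/-- ε-local truncation of α at x: restrict to the closed ε-ball and renormalize. -/
noncomputable def localTrunc {X : Type*} [MeasurableSpace X] [PseudoMetricSpace X]
    (α : Measure X) (ε : ℝ) (x : X) : Measure X :=
  (α (closedBall x ε))⁻¹ • α.restrict (closedBall x ε)

/-- The support of a measure: points all of whose neighborhoods have positive measure. -/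
def msupport {X : Type*} [TopologicalSpace X] [MeasurableSpace X] (μ : Measure X) : Set X :=
  {x : X | ∀ U ∈ nhds x, 0 < μ U}

/-- The Λ-doubling condition for a Borel measure: for points in the support,
`α (closedBall x r₁) / α (closedBall x r₂) ≤ (r₁/r₂)^Λ` whenever `r₁ ≥ r₂ > 0`. -/
def DoublingCond {X : Type*} [MeasurableSpace X] [PseudoMetricSpace X]
    (α : Measure X) (Λ : ℝ) : Prop :=
  ∀ x ∈ msupport α, ∀ r₁ r₂ : ℝ, r₂ ≤ r₁ → 0 < r₂ →
    α (closedBall x r₁) / α (closedBall x r₂) ≤ ENNReal.ofReal ((r₁ / r₂) ^ Λ)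

/-- `ψ_{Λ,D}(r) = min(1, (r/D)^Λ)`. -/
noncomputable def psiLD (Λ D r : ℝ) : ℝ := min 1 ((r / D) ^ Λ)

/-- `Φ_{Λ,D,ε}(η) = η/ψ_{Λ,D}(ε) + ((1+η/ε)^Λ − 1)`. -/
noncomputable def PhiLDE (Λ D ε η : ℝ) : ℝ := η / psiLD Λ D ε + ((1 + η / ε) ^ Λ - 1)

/-!
Full support makes `m_α^{(ε)}(x)` a probability measure concentrated on `B_ε(x)`. Hence under any
coupling of `m_α^{(ε)}(x)` and `m_α^{(ε)}(x')` the cost `d(y, y')` is within `2ε` of `d(x, x')`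
almost surely, and so `|d_α^{(ε)}(x, x') - d(x, x')| ≤ 2ε`.
-/

section LocalTrunc

variable {X : Type*} [PseudoMetricSpace X] [MeasurableSpace X]

lemma ae_mem_closedBall_localTrunc [OpensMeasurableSpace X] (α : Measure X) (ε : ℝ) (x : X) :
    ∀ᵐ y ∂localTrunc α ε x, y ∈ closedBall x ε :=
  Measure.ae_smul_measure (ae_restrict_mem measurableSet_closedBall) _

lemma isProbabilityMeasure_localTrunc (α : Measure X) [IsFiniteMeasure α] {ε : ℝ} {x : X}
    (hpos : 0 < α (closedBall x ε)) : IsProbabilityMeasure (localTrunc α ε x) := by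
  constructor
  simp [localTrunc, ENNReal.inv_mul_cancel hpos.ne' (measure_ne_top α _)]

end LocalTrunc

section Wasserstein

variable {X : Type*} [PseudoMetricSpace X] [MeasurableSpace X]

lemma dist_integral_dist_le (μ : Measure (X × X)) [IsProbabilityMeasure μ]
    [SecondCountableTopology X] [OpensMeasurableSpace X] {x y : X} {r s : ℝ}
    (hμ : ∀ᵐ p ∂μ, p.1 ∈ closedBall x r ∧ p.2 ∈ closedBall y s) :
    dist (∫ p, dist p.1 p.2 ∂μ) (dist x y) ≤ r + s := by
  have hclose : ∀ᵐ p ∂μ, ‖dist p.1 p.2 - dist x y‖ ≤ r + s := by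
    filter_upwards [hμ] with p ⟨hp₁, hp₂⟩
    calc ‖dist p.1 p.2 - dist x y‖ = dist (dist p.1 p.2) (dist x y) := rfl
      _ ≤ dist p.1 x + dist p.2 y := dist_dist_dist_le _ _ _ _
      _ ≤ r + s := add_le_add hp₁ hp₂
  have hint : Integrable (fun p : X × X => dist p.1 p.2) μ := by
    refine .of_bound (continuous_fst.dist continuous_snd).aestronglyMeasurable
      (dist x y + (r + s)) ?_
    filter_upwards [hclose] with p hp
    rw [Real.norm_of_nonneg dist_nonneg]
    linarith [(abs_le.mp hp).2]
  calc dist (∫ p, dist p.1 p.2 ∂μ) (dist x y) = ‖∫ p, (dist p.1 p.2 - dist x y) ∂μ‖ := by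
        rw [integral_sub hint (integrable_const _), integral_const]; simp [Real.dist_eq]
    _ ≤ r + s := by simpa using norm_integral_le_of_norm_le_const hclose

lemma dist_wassersteinDist_le [SecondCountableTopology X] [OpensMeasurableSpace X]
    {ν₁ ν₂ : Measure X} [IsProbabilityMeasure ν₁] [IsProbabilityMeasure ν₂] {x y : X} {r s : ℝ}
    (h₁ : ∀ᵐ z ∂ν₁, z ∈ closedBall x r) (h₂ : ∀ᵐ z ∂ν₂, z ∈ closedBall y s) :
    dist (wassersteinDist ν₁ ν₂) (dist x y) ≤ r + s := by
  set S := (fun μ : Measure (X × X) => ∫ p, dist p.1 p.2 ∂μ) ''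
    {μ | μ.map Prod.fst = ν₁ ∧ μ.map Prod.snd = ν₂}
  have hS : S ⊆ closedBall (dist x y) (r + s) := by
    rintro _ ⟨μ, ⟨hμ₁, hμ₂⟩, rfl⟩
    have : IsProbabilityMeasure μ :=
      (Measure.isProbabilityMeasure_map_iff measurable_fst.aemeasurable).mp (hμ₁ ▸ ‹_›)
    have hfst := ae_of_ae_map measurable_fst.aemeasurable (p := (· ∈ closedBall x r)) (hμ₁ ▸ h₁)
    have hsnd := ae_of_ae_map measurable_snd.aemeasurable (p := (· ∈ closedBall y s)) (hμ₂ ▸ h₂)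
    exact dist_integral_dist_le μ (hfst.and hsnd)
  have hne : S.Nonempty := ⟨_, ν₁.prod ν₂, ⟨by simp, by simp⟩, rfl⟩
  have hbdd : BddBelow S := (isBounded_closedBall.subset hS).bddBelow
  exact closure_minimal hS isClosed_closedBall (csInf_mem_closure hne hbdd)

end Wasserstein

/-- **Remark 3(1) of the paper**: for a fully supported Borel probability measure α on a
compact metric space, `d_α^{(ε)}(x,x') → d(x,x')` as `ε → 0⁺`, for every pair x, x'. -/
theorem wasserstein_transform_tendsto_dist
    {X : Type*} [MetricSpace X] [CompactSpace X] [MeasurableSpace X] [BorelSpace X]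
    (α : Measure X) [IsProbabilityMeasure α] (hαfull : msupport α = Set.univ) :
    ∀ x x' : X,
      Filter.Tendsto (fun ε : ℝ => wassersteinDist (localTrunc α ε x) (localTrunc α ε x'))
        (nhdsWithin 0 (Set.Ioi 0)) (nhds (dist x x')) := by
  intro x x'
  have hclose : ∀ ε > 0, dist (wassersteinDist (localTrunc α ε x) (localTrunc α ε x'))
      (dist x x') ≤ ε + ε := fun ε hε ↦ by
    have (z : X) : IsProbabilityMeasure (localTrunc α ε z) :=
      isProbabilityMeasure_localTrunc α ((hαfull ▸ mem_univ z : z ∈ msupport α) _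
        (closedBall_mem_nhds z hε))
    exact dist_wassersteinDist_le (ae_mem_closedBall_localTrunc α ε x)
      (ae_mem_closedBall_localTrunc α ε x')
  have htwo : Tendsto (fun ε : ℝ => ε + ε) (nhdsWithin 0 (Ioi 0)) (nhds 0) :=
    ((continuous_id.add continuous_id).tendsto' 0 0 (add_zero 0)).mono_left nhdsWithin_le_nhds
  rw [tendsto_iff_dist_tendsto_zero]
  refine squeeze_zero' (.of_forall fun _ ↦ dist_nonneg) ?_ htwo
  filter_upwards [self_mem_nhdsWithin] with ε hε using hclose ε hε
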